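/- arXiv:2405.18034 — 4 statements merged into one kernel-verified Lean document; each statement's English description precedes it below -/
import Mathlib

section
/- Let f: ℝ^d → ℝ be differentiable with ∇f being q-growth Lipschitz for q ≥ 1 with constant L_q. Then for all x, y ∈ ℝ^d, f(y) ≤ f(x) + ∇f(x)·(y - x) + 2^(2q-2) L_q (1 + |x|^(q-1) + |y|^(q-1)) |x - y|². -/
open Set

/-!
Along the segment from `x` to `y` the growth factor `1 + ‖z‖^(q-1) + ‖x‖^(q-1)` is at most
`2 (1 + ‖x‖^(q-1) + ‖y‖^(q-1))`, because the norm is convex. So on that segment the derivative is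
Lipschitz around `x` with constant `2 L (1 + ‖x‖^(q-1) + ‖y‖^(q-1))`, and the classical descent
lemma gives the bound with constant `L (1 + ‖x‖^(q-1) + ‖y‖^(q-1)) ≤ 2^(2q-2) L (…)`.
-/

section NormedSpace

variable {E : Type*} [NormedAddCommGroup E] [NormedSpace ℝ E]

theorem image_le_add_fderiv_add_sq_of_norm_fderiv_sub_le {f : E → ℝ} {f' : E → E →L[ℝ] ℝ} {x y : E}
    {C : ℝ} (hf : ∀ z ∈ segment ℝ x y, HasFDerivAt f (f' z) z)
    (hf' : ∀ z ∈ segment ℝ x y, ‖f' z - f' x‖ ≤ C * ‖z - x‖) :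
    f y ≤ f x + f' x (y - x) + C / 2 * ‖y - x‖ ^ 2 := by
  set γ : ℝ → E := fun t ↦ x + t • (y - x)
  have hγ : ∀ t ∈ Icc (0 : ℝ) 1, γ t ∈ segment ℝ x y := fun t ht ↦ by
    rw [segment_eq_image']; exact mem_image_of_mem _ ht
  set g : ℝ → ℝ := fun t ↦ f (γ t) - t * f' x (y - x) - C / 2 * ‖y - x‖ ^ 2 * t ^ 2
  have hg : ∀ t ∈ Icc (0 : ℝ) 1,
      HasDerivAt g (f' (γ t) (y - x) - f' x (y - x) - C / 2 * ‖y - x‖ ^ 2 * (2 * t)) t := by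
    intro t ht
    have hγ' : HasDerivAt γ (y - x) t :=
      HasDerivAt.const_add x (by simpa using (hasDerivAt_id t).smul_const (y - x))
    exact (((hf _ (hγ t ht)).comp_hasDerivAt t hγ').sub (hasDerivAt_mul_const _)).sub
      (by simpa using (hasDerivAt_pow 2 t).const_mul (C / 2 * ‖y - x‖ ^ 2))
  have hg_anti : AntitoneOn g (Icc 0 1) := by
    refine antitoneOn_of_deriv_nonpos (convex_Icc 0 1)
      (fun t ht ↦ (hg t ht).continuousAt.continuousWithinAt)
      (fun t ht ↦ (hg t (interior_subset ht)).differentiableAt.differentiableWithinAt)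
      fun t ht ↦ ?_
    have ht' : t ∈ Icc (0 : ℝ) 1 := interior_subset ht
    rw [(hg t ht').deriv]
    have hγx : ‖γ t - x‖ = t * ‖y - x‖ := by
      simp [γ, norm_smul, abs_of_nonneg ht'.1]
    have hderiv_le := calc f' (γ t) (y - x) - f' x (y - x)
        = (f' (γ t) - f' x) (y - x) := rfl
      _ ≤ ‖f' (γ t) - f' x‖ * ‖y - x‖ := (le_abs_self _).trans ((f' (γ t) - f' x).le_opNorm _)
      _ ≤ C * (t * ‖y - x‖) * ‖y - x‖ := by
        rw [← hγx]; exact mul_le_mul_of_nonneg_right (hf' _ (hγ t ht')) (norm_nonneg _)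
    linarith
  have h01 := hg_anti (left_mem_Icc.2 zero_le_one) (right_mem_Icc.2 zero_le_one) zero_le_one
  simp only [g, γ, zero_smul, add_zero, one_smul, add_sub_cancel, zero_mul, sub_zero,
    one_mul, one_pow, mul_one, zero_pow two_ne_zero, mul_zero] at h01
  linarith

theorem rpow_norm_le_add_of_mem_segment {x y z : E} {p : ℝ} (hp : 0 ≤ p)
    (hz : z ∈ segment ℝ x y) :
    ‖z‖ ^ p ≤ ‖x‖ ^ p + ‖y‖ ^ p := by
  have hz_le : ‖z‖ ≤ max ‖x‖ ‖y‖ := (convexOn_norm convex_univ).le_on_segment trivial trivial hz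
  calc ‖z‖ ^ p ≤ max ‖x‖ ‖y‖ ^ p := Real.rpow_le_rpow (norm_nonneg _) hz_le hp
    _ = max (‖x‖ ^ p) (‖y‖ ^ p) := Real.rpow_max (norm_nonneg _) (norm_nonneg _) hp
    _ ≤ ‖x‖ ^ p + ‖y‖ ^ p := max_le_add_of_nonneg (by positivity) (by positivity)

end NormedSpace

/-- if `∇f` is `q`-growth Lipschitz with constant `L` for `q ≥ 1`, then
`f y ≤ f x + ∇f(x)·(y-x) + 2^(2q-2) L (1 + ‖x‖^(q-1) + ‖y‖^(q-1)) ‖x-y‖²`. -/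
theorem descent_lemma_growth_lipschitz
    (d : ℕ) (q L : ℝ) (hq : 1 ≤ q) (hL : 0 < L)
    (f : EuclideanSpace ℝ (Fin d) → ℝ)
    (f' : EuclideanSpace ℝ (Fin d) → EuclideanSpace ℝ (Fin d))
    (hdiff : ∀ x, HasGradientAt f (f' x) x)
    (hgl : ∀ x y : EuclideanSpace ℝ (Fin d),
      ‖f' x - f' y‖ ≤ L * min ‖x - y‖ 1 * (1 + ‖x‖ ^ (q - 1) + ‖y‖ ^ (q - 1))) :
    ∀ x y : EuclideanSpace ℝ (Fin d),
      f y ≤ f x + (inner ℝ (f' x) (y - x) : ℝ)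
        + (2 : ℝ) ^ (2 * q - 2) * L * (1 + ‖x‖ ^ (q - 1) + ‖y‖ ^ (q - 1)) * ‖x - y‖ ^ 2 := by
  intro x y
  set M := 1 + ‖x‖ ^ (q - 1) + ‖y‖ ^ (q - 1) with hM_def
  have hgrad_sub : ∀ z ∈ segment ℝ x y,
      ‖InnerProductSpace.toDual ℝ _ (f' z) - InnerProductSpace.toDual ℝ _ (f' x)‖
        ≤ 2 * L * M * ‖z - x‖ := by
    intro z hz
    have hzp := rpow_norm_le_add_of_mem_segment (by linarith : 0 ≤ q - 1) hz
    rw [← map_sub, LinearIsometryEquiv.norm_map]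
    calc ‖f' z - f' x‖ ≤ L * min ‖z - x‖ 1 * (1 + ‖z‖ ^ (q - 1) + ‖x‖ ^ (q - 1)) := hgl z x
      _ ≤ L * ‖z - x‖ * (2 * M) := by
        gcongr
        · exact min_le_left _ _
        · have : 0 ≤ ‖y‖ ^ (q - 1) := by positivity
          linarith [hM_def]
      _ = 2 * L * M * ‖z - x‖ := by ring
  have hdescent := image_le_add_fderiv_add_sq_of_norm_fderiv_sub_le
    (fun z _ ↦ (hdiff z).hasFDerivAt) hgrad_sub
  rw [InnerProductSpace.toDual_apply_apply, norm_sub_rev] at hdescent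
  have hpow : (1 : ℝ) ≤ 2 ^ (2 * q - 2) := Real.one_le_rpow one_le_two (by linarith)
  have hLM : 0 ≤ L * M * ‖x - y‖ ^ 2 := by positivity
  nlinarith
end

section
/- Let V: ℝ^d → ℝ be λ_V-convex and W: ℝ^d → ℝ be λ_W-convex with λ_V, λ_W ∈ ℝ. Then the function Ψ(x) = Σ_{i=1}^N (V(x^i) + (1/(2N)) Σ_{j=1}^N W(x^i - x^j)) on ℝ^(dN) is min{λ_V, λ_V + 2λ_W}-convex. -/
open Set

/-- `λ`-convexity of a real-valued function on a normed real vector space. -/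
def IsLambdaConvex {F : Type*} [NormedAddCommGroup F] [NormedSpace ℝ F]
    (lam : ℝ) (f : F → ℝ) : Prop :=
  ∀ x y : F, ∀ θ : ℝ, θ ∈ Set.Icc (0 : ℝ) 1 →
    f (θ • x + (1 - θ) • y) ≤ θ * f x + (1 - θ) * f y - lam / 2 * θ * (1 - θ) * ‖x - y‖ ^ 2

/-- The interaction energy `Ψ(x) = ∑ᵢ (V(xⁱ) + (1/(2N)) ∑ⱼ W(xⁱ - xʲ))` on `ℝ^(dN)`
(with the Euclidean norm on the product). -/
noncomputable def Psi (d N : ℕ) (V W : EuclideanSpace ℝ (Fin d) → ℝ)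
    (x : PiLp 2 fun _ : Fin N => EuclideanSpace ℝ (Fin d)) : ℝ :=
  ∑ i, (V (x i) + 1 / (2 * (N : ℝ)) * ∑ j, W (x i - x j))

/-- if `V` is `λ_V`-convex and `W` is `λ_W`-convex, then `Ψ` is
`min {λ_V, λ_V + 2 λ_W}`-convex. -/
theorem Psi_min_lambda_convex
    (d N : ℕ) (hN : 0 < N) (lamV lamW : ℝ)
    (V W : EuclideanSpace ℝ (Fin d) → ℝ)
    (hV : IsLambdaConvex lamV V)
    (hW : IsLambdaConvex lamW W) :
    IsLambdaConvex (min lamV (lamV + 2 * lamW)) (Psi d N V W) := by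
  intro x y θ hθ
  obtain ⟨h0, h1⟩ := hθ
  have hN' : (0:ℝ) < N := by exact_mod_cast hN
  set lam := min lamV (lamV + 2 * lamW) with hlamdef
  set c : ℝ := 1 / (2 * (N : ℝ)) with hc
  have hc0 : (0:ℝ) ≤ c := by positivity
  have ht : (0:ℝ) ≤ θ * (1 - θ) := mul_nonneg h0 (by linarith)
  set A : ℝ := ∑ i, ‖x i - y i‖ ^ 2 with hAdef
  set S : ℝ := ∑ i, ∑ j, ‖(x i - y i) - (x j - y j)‖ ^ 2 with hSdef
  have hA0 : (0:ℝ) ≤ A := Finset.sum_nonneg fun i _ => sq_nonneg _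
  have hS0 : (0:ℝ) ≤ S :=
    Finset.sum_nonneg fun i _ => Finset.sum_nonneg fun j _ => sq_nonneg _
  have hnorm : ‖x - y‖ ^ 2 = A := by
    rw [hAdef, PiLp.norm_sq_eq_of_L2]
    exact Finset.sum_congr rfl fun i _ => by
      rw [PiLp.norm_sq_eq_of_L2, PiLp.norm_sq_eq_of_L2]; rfl
  have hS_le : S ≤ 4 * N * A := by
    have hterm : ∀ a b : EuclideanSpace ℝ (Fin d),
        ‖a - b‖ ^ 2 ≤ 2 * ‖a‖ ^ 2 + 2 * ‖b‖ ^ 2 := by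
      intro a b
      have h := norm_sub_le a b
      nlinarith [sq_nonneg (‖a‖ - ‖b‖), norm_nonneg a, norm_nonneg b, norm_nonneg (a - b)]
    calc S ≤ ∑ i, ∑ j, (2 * ‖x i - y i‖ ^ 2 + 2 * ‖x j - y j‖ ^ 2) := by
            apply Finset.sum_le_sum
            intro i _
            exact Finset.sum_le_sum fun j _ => hterm _ _
      _ = 4 * N * A := by
            simp only [Finset.sum_add_distrib, Finset.sum_const, Finset.card_univ,
              Fintype.card_fin, nsmul_eq_mul, ← Finset.mul_sum, ← hAdef]
            ring
  -- main estimate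
  have hmain : Psi d N V W (θ • x + (1 - θ) • y)
      ≤ θ * Psi d N V W x + (1 - θ) * Psi d N V W y
        - lamV / 2 * θ * (1 - θ) * A - c * (lamW / 2 * θ * (1 - θ) * S) := by
    have hrhs : θ * Psi d N V W x + (1 - θ) * Psi d N V W y
          - lamV / 2 * θ * (1 - θ) * A - c * (lamW / 2 * θ * (1 - θ) * S)
        = ∑ i, (θ * (V (x i) + c * ∑ j, W (x i - x j))
            + (1 - θ) * (V (y i) + c * ∑ j, W (y i - y j))
            - lamV / 2 * θ * (1 - θ) * ‖x i - y i‖ ^ 2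
            - c * (lamW / 2 * θ * (1 - θ) * ∑ j, ‖(x i - y i) - (x j - y j)‖ ^ 2)) := by
      simp only [Psi, hAdef, hSdef, Finset.mul_sum, ← hc]
      rw [← Finset.sum_add_distrib, ← Finset.sum_sub_distrib, ← Finset.sum_sub_distrib]
    rw [hrhs, Psi]
    apply Finset.sum_le_sum
    intro i _
    have hVi : V ((θ • x + (1 - θ) • y) i)
        ≤ θ * V (x i) + (1 - θ) * V (y i) - lamV / 2 * θ * (1 - θ) * ‖x i - y i‖ ^ 2 :=
      hV (x i) (y i) θ ⟨h0, h1⟩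
    have hWsum : ∑ j, W ((θ • x + (1 - θ) • y) i - (θ • x + (1 - θ) • y) j)
        ≤ ∑ j, (θ * W (x i - x j) + (1 - θ) * W (y i - y j)
            - lamW / 2 * θ * (1 - θ) * ‖(x i - y i) - (x j - y j)‖ ^ 2) := by
      apply Finset.sum_le_sum
      intro j _
      have he : (θ • x + (1 - θ) • y) i - (θ • x + (1 - θ) • y) j
          = θ • (x i - x j) + (1 - θ) • (y i - y j) := by
        show (θ • x i + (1 - θ) • y i) - (θ • x j + (1 - θ) • y j) = _
        module
      have he2 : (x i - x j) - (y i - y j) = (x i - y i) - (x j - y j) := by abel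
      have := hW (x i - x j) (y i - y j) θ ⟨h0, h1⟩
      rw [he2] at this
      rw [he]
      exact this
    have hexp : ∑ j, (θ * W (x i - x j) + (1 - θ) * W (y i - y j)
            - lamW / 2 * θ * (1 - θ) * ‖(x i - y i) - (x j - y j)‖ ^ 2)
        = θ * ∑ j, W (x i - x j) + (1 - θ) * ∑ j, W (y i - y j)
          - lamW / 2 * θ * (1 - θ) * ∑ j, ‖(x i - y i) - (x j - y j)‖ ^ 2 := by
      rw [Finset.sum_sub_distrib, Finset.sum_add_distrib, ← Finset.mul_sum,
        ← Finset.mul_sum, ← Finset.mul_sum]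
    have hWc : c * ∑ j, W ((θ • x + (1 - θ) • y) i - (θ • x + (1 - θ) • y) j)
        ≤ c * (θ * ∑ j, W (x i - x j) + (1 - θ) * ∑ j, W (y i - y j)
          - lamW / 2 * θ * (1 - θ) * ∑ j, ‖(x i - y i) - (x j - y j)‖ ^ 2) :=
      mul_le_mul_of_nonneg_left (hexp ▸ hWsum) hc0
    calc V ((θ • x + (1 - θ) • y) i)
          + c * ∑ j, W ((θ • x + (1 - θ) • y) i - (θ • x + (1 - θ) • y) j)
        ≤ (θ * V (x i) + (1 - θ) * V (y i) - lamV / 2 * θ * (1 - θ) * ‖x i - y i‖ ^ 2)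
          + c * (θ * ∑ j, W (x i - x j) + (1 - θ) * ∑ j, W (y i - y j)
            - lamW / 2 * θ * (1 - θ) * ∑ j, ‖(x i - y i) - (x j - y j)‖ ^ 2) :=
          add_le_add hVi hWc
      _ = θ * (V (x i) + c * ∑ j, W (x i - x j))
            + (1 - θ) * (V (y i) + c * ∑ j, W (y i - y j))
            - lamV / 2 * θ * (1 - θ) * ‖x i - y i‖ ^ 2
            - c * (lamW / 2 * θ * (1 - θ) * ∑ j, ‖(x i - y i) - (x j - y j)‖ ^ 2) := by
          ring
  -- final comparison
  have hkey : lam / 2 * θ * (1 - θ) * A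
      ≤ lamV / 2 * θ * (1 - θ) * A + c * (lamW / 2 * θ * (1 - θ) * S) := by
    rcases le_total 0 lamW with hw | hw
    · have h2 : lam ≤ lamV := min_le_left _ _
      have h3 : (0:ℝ) ≤ c * (lamW / 2 * θ * (1 - θ) * S) := by
        apply mul_nonneg hc0
        apply mul_nonneg _ hS0
        apply mul_nonneg _ (by linarith : (0:ℝ) ≤ 1 - θ)
        exact mul_nonneg (by linarith) h0
      nlinarith [mul_nonneg (mul_nonneg (sub_nonneg.2 h2) ht) hA0]
    · have h2 : lam ≤ lamV + 2 * lamW := min_le_right _ _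
      have hcoef : lamW / 2 * θ * (1 - θ) ≤ 0 := by nlinarith
      have step1 : lamW / 2 * θ * (1 - θ) * (4 * N * A) ≤ lamW / 2 * θ * (1 - θ) * S :=
        mul_le_mul_of_nonpos_left hS_le hcoef
      have step2 : c * (lamW / 2 * θ * (1 - θ) * (4 * N * A)) = lamW * θ * (1 - θ) * A := by
        rw [hc]; field_simp; ring
      have step3 : lamW * θ * (1 - θ) * A ≤ c * (lamW / 2 * θ * (1 - θ) * S) := by
        rw [← step2]; exact mul_le_mul_of_nonneg_left step1 hc0
      nlinarith [mul_nonneg (mul_nonneg (sub_nonneg.2 h2) ht) hA0]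
  rw [hnorm]
  linarith
end

section
/- Let X, Z be ℝ^n-valued random variables with finite a-th moments for some a ≥ 2, with Z independent of X and E[Z] = 0. Then there exists a constant C_a depending only on a such that E|X + Z|^a ≤ E|X|^a + C_a (E[|X|^(a-2)|Z|²] + E|Z|^a). -/
/-!
Pointwise, `‖x + z‖ ^ a ≤ ‖x‖ ^ a + a ‖x‖ ^ (a - 2) ⟪x, z⟫ + C (‖x‖ ^ (a - 2) ‖z‖ ^ 2 + ‖z‖ ^ a)`.
If `‖x‖ ≤ 4 ‖z‖`, every term is of order `‖z‖ ^ a`. Otherwise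
`‖x + z‖ ^ 2 = ‖x‖ ^ 2 (1 + δ)` with `δ ∈ [-1/2, 1]`, and the second-order expansion of
`(1 + δ) ^ (a / 2)`, obtained from the mean value inequality, gives the bound.
Taking expectations, the linear term vanishes: by independence,
`E[‖X‖ ^ (a - 2) ⟪X, Z⟫] = ⟪E[‖X‖ ^ (a - 2) X], E[Z]⟫ = 0`.
-/

open Set MeasureTheory ProbabilityTheory
open scoped RealInnerProductSpace

theorem abs_one_add_rpow_sub_one_le {q t : ℝ} (hq : 0 ≤ q) (ht : t ∈ Icc (-1 / 2 : ℝ) 1) :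
    |(1 + t) ^ q - 1| ≤ q * 2 ^ (q + 1) * |t| := by
  have hderiv : ∀ s ∈ Icc (-1 / 2 : ℝ) 1, HasDerivWithinAt (fun s => (1 + s) ^ q)
      (q * (1 + s) ^ (q - 1)) (Icc (-1 / 2 : ℝ) 1) s := fun s hs => by
    simpa using (((hasDerivAt_id' s).const_add 1).rpow_const
      (Or.inl (show 1 + s ≠ 0 by linarith [hs.1]))).hasDerivWithinAt
  have hbound : ∀ s ∈ Icc (-1 / 2 : ℝ) 1, ‖q * (1 + s) ^ (q - 1)‖ ≤ q * 2 ^ (q + 1) := by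
    rintro s ⟨hs₁, hs₂⟩
    have h1s : 0 < 1 + s := by linarith
    rw [Real.norm_eq_abs, abs_of_nonneg (by positivity), Real.rpow_sub_one h1s.ne',
      Real.rpow_add_one two_ne_zero]
    gcongr q * ?_
    calc (1 + s) ^ q / (1 + s) ≤ 2 ^ q / (1 / 2) := by gcongr <;> linarith
      _ = 2 ^ q * 2 := by ring
  simpa using (convex_Icc _ _).norm_image_sub_le_of_norm_hasDerivWithin_le hderiv hbound
    (by norm_num : (0 : ℝ) ∈ Icc (-1 / 2 : ℝ) 1) ht

theorem abs_one_add_rpow_sub_one_sub_mul_le {p δ : ℝ} (hp : 1 ≤ p) (hδ : δ ∈ Icc (-1 / 2 : ℝ) 1) :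
    |(1 + δ) ^ p - 1 - p * δ| ≤ p * (p - 1) * 2 ^ p * δ ^ 2 := by
  have hsub : uIcc 0 δ ⊆ Icc (-1 / 2 : ℝ) 1 := uIcc_subset_Icc (by norm_num) hδ
  have hderiv : ∀ s ∈ uIcc 0 δ, HasDerivWithinAt (fun s => (1 + s) ^ p - p * s)
      (p * ((1 + s) ^ (p - 1) - 1)) (uIcc 0 δ) s := fun s hs => by
    have := (((hasDerivAt_id' s).const_add 1).rpow_const (p := p)
      (Or.inl (show 1 + s ≠ 0 by linarith [(hsub hs).1]))).sub ((hasDerivAt_id' s).const_mul p)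
    exact this.hasDerivWithinAt.congr_deriv (by ring)
  have hbound : ∀ s ∈ uIcc 0 δ, ‖p * ((1 + s) ^ (p - 1) - 1)‖ ≤ p * (p - 1) * 2 ^ p * |δ| := by
    intro s hs
    have hsδ : |s| ≤ |δ| := by simpa using abs_sub_left_of_mem_uIcc hs
    have hlip := abs_one_add_rpow_sub_one_le (sub_nonneg.2 hp) (hsub hs)
    rw [sub_add_cancel] at hlip
    rw [Real.norm_eq_abs, abs_mul, abs_of_nonneg (by linarith)]
    calc p * |(1 + s) ^ (p - 1) - 1| ≤ p * ((p - 1) * 2 ^ p * |δ|) := by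
          gcongr
          exact hlip.trans (by gcongr)
      _ = p * (p - 1) * 2 ^ p * |δ| := by ring
  have := (convex_uIcc 0 δ).norm_image_sub_le_of_norm_hasDerivWithin_le hderiv hbound
    left_mem_uIcc right_mem_uIcc
  simp only [Real.norm_eq_abs, sub_zero, add_zero, Real.one_rpow, mul_zero] at this
  rw [← sq_abs δ, sq, ← mul_assoc]
  convert this using 2
  ring

theorem sq_rpow_half {x : ℝ} (hx : 0 ≤ x) (a : ℝ) : (x ^ 2) ^ (a / 2) = x ^ a := by
  rw [← Real.rpow_natCast_mul hx, Nat.cast_ofNat, mul_div_cancel₀ a two_ne_zero]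

theorem rpow_sub_two_mul_sq {x a : ℝ} (hx : 0 ≤ x) (ha : a ≠ 0) : x ^ (a - 2) * x ^ 2 = x ^ a := by
  rw [← Real.rpow_two, ← Real.rpow_add' hx (by simpa using ha), sub_add_cancel]

section Pointwise

variable {E : Type*} [NormedAddCommGroup E] [InnerProductSpace ℝ E] {a : ℝ} {x z : E}

theorem rpow_norm_add_le_of_norm_le_four_mul (ha : 2 ≤ a) (h : ‖x‖ ≤ 4 * ‖z‖) :
    ‖x + z‖ ^ a ≤ ‖x‖ ^ a + a * (‖x‖ ^ (a - 2) * ⟪x, z⟫) + (5 ^ a + a * 4 ^ a) * ‖z‖ ^ a := by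
  have hs := norm_nonneg z
  have hsum : ‖x + z‖ ^ a ≤ 5 ^ a * ‖z‖ ^ a := by
    rw [← Real.mul_rpow (by norm_num) hs]
    exact Real.rpow_le_rpow (norm_nonneg _) ((norm_add_le x z).trans (by linarith)) (by linarith)
  have hcross : |‖x‖ ^ (a - 2) * ⟪x, z⟫| ≤ 4 ^ a * ‖z‖ ^ a := by
    calc |‖x‖ ^ (a - 2) * ⟪x, z⟫| ≤ ‖x‖ ^ (a - 2) * (‖x‖ * ‖z‖) := by
          rw [abs_mul, abs_of_nonneg (by positivity)]
          gcongr
          exact abs_real_inner_le_norm x z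
      _ ≤ (4 * ‖z‖) ^ (a - 2) * (4 * ‖z‖) ^ 2 := by
          gcongr
          nlinarith [mul_le_mul_of_nonneg_right h hs]
      _ = 4 ^ a * ‖z‖ ^ a := by
          rw [rpow_sub_two_mul_sq (by positivity) (by linarith), Real.mul_rpow (by norm_num) hs]
  have := mul_le_mul_of_nonneg_left (neg_le_of_abs_le hcross) (by linarith : (0 : ℝ) ≤ a)
  linarith [Real.rpow_nonneg (norm_nonneg x) a]

theorem rpow_norm_add_le_of_four_mul_le_norm (ha : 2 ≤ a) (h : 4 * ‖z‖ ≤ ‖x‖) :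
    ‖x + z‖ ^ a ≤ ‖x‖ ^ a + a * (‖x‖ ^ (a - 2) * ⟪x, z⟫)
      + (a / 2 + 9 * (a / 2 * (a / 2 - 1) * 2 ^ (a / 2))) * (‖x‖ ^ (a - 2) * ‖z‖ ^ 2) := by
  have ha0 : a ≠ 0 := by linarith
  rcases (norm_nonneg x).eq_or_lt' with hx | hx
  · have hz : z = 0 := norm_le_zero_iff.1 (by linarith [norm_nonneg z])
    simp [norm_eq_zero.1 hx, hz, Real.zero_rpow ha0]
  have hI := abs_le.1 (abs_real_inner_le_norm x z)
  set r := ‖x‖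
  set s := ‖z‖
  set K := a / 2 * (a / 2 - 1) * 2 ^ (a / 2) with hK
  have hK0 : 0 ≤ K := by
    have : 0 ≤ a / 2 - 1 := by linarith
    positivity
  set D := 2 * ⟪x, z⟫ + s ^ 2 with hD
  have hDlow : -(2 * r * s) ≤ D := by nlinarith
  have hDup : D ≤ 3 * r * s := by nlinarith [norm_nonneg z]
  have hδ : D / r ^ 2 ∈ Icc (-1 / 2 : ℝ) 1 := by
    constructor
    · rw [le_div_iff₀ (by positivity)]; nlinarith [norm_nonneg z]
    · rw [div_le_iff₀ (by positivity)]; nlinarith [norm_nonneg z]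
  have hexp : (1 + D / r ^ 2) ^ (a / 2) ≤ 1 + a / 2 * (D / r ^ 2) + K * (D / r ^ 2) ^ 2 := by
    have := (abs_le.1 (abs_one_add_rpow_sub_one_sub_mul_le (p := a / 2) (by linarith) hδ)).2
    rw [hK]
    linarith
  have hsq : ‖x + z‖ ^ 2 = r ^ 2 * (1 + D / r ^ 2) := by
    rw [norm_add_sq_real]; field_simp; ring
  have hD2 : D ^ 2 / r ^ 2 ≤ 9 * s ^ 2 := by
    rw [div_le_iff₀ (by positivity)]; nlinarith [norm_nonneg z]
  calc ‖x + z‖ ^ a = (‖x + z‖ ^ 2) ^ (a / 2) := (sq_rpow_half (norm_nonneg _) a).symm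
    _ = r ^ a * (1 + D / r ^ 2) ^ (a / 2) := by
        rw [hsq, Real.mul_rpow (by positivity) (by linarith [hδ.1]), sq_rpow_half hx.le]
    _ ≤ r ^ a * (1 + a / 2 * (D / r ^ 2) + K * (D / r ^ 2) ^ 2) := by gcongr
    _ = r ^ (a - 2) * (r ^ 2 + a / 2 * D + K * (D ^ 2 / r ^ 2)) := by
        rw [← rpow_sub_two_mul_sq hx.le ha0]; field_simp
    _ ≤ r ^ (a - 2) * (r ^ 2 + a / 2 * D + K * (9 * s ^ 2)) := by gcongr
    _ = _ := by rw [← rpow_sub_two_mul_sq hx.le ha0]; ring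

noncomputable def momentConst (a : ℝ) : ℝ :=
  5 ^ a + a * 4 ^ a + (a / 2 + 9 * (a / 2 * (a / 2 - 1) * 2 ^ (a / 2)))

theorem momentConst_pos {a : ℝ} (ha : 2 ≤ a) : 0 < momentConst a := by
  have : 0 ≤ a / 2 - 1 := by linarith
  unfold momentConst
  positivity

theorem rpow_norm_add_le (ha : 2 ≤ a) :
    ‖x + z‖ ^ a ≤ ‖x‖ ^ a + a * (‖x‖ ^ (a - 2) * ⟪x, z⟫)
      + momentConst a * (‖x‖ ^ (a - 2) * ‖z‖ ^ 2 + ‖z‖ ^ a) := by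
  have : 0 ≤ a / 2 - 1 := by linarith
  have hmixed : 0 ≤ ‖x‖ ^ (a - 2) * ‖z‖ ^ 2 := by positivity
  have hza : 0 ≤ ‖z‖ ^ a := by positivity
  have hC := (momentConst_pos ha).le
  rcases le_total ‖x‖ (4 * ‖z‖) with h | h
  · exact (rpow_norm_add_le_of_norm_le_four_mul ha h).trans (add_le_add le_rfl
      (mul_le_mul (le_add_of_nonneg_right (by positivity)) (le_add_of_nonneg_left hmixed) hza hC))
  · exact (rpow_norm_add_le_of_four_mul_le_norm ha h).trans (add_le_add le_rfl
      (mul_le_mul (le_add_of_nonneg_left (by positivity)) (le_add_of_nonneg_right hza) hmixed hC))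

end Pointwise

section Integral

variable {Ω E : Type*} [MeasurableSpace Ω] [NormedAddCommGroup E] {μ : Measure Ω} {a b : ℝ}

theorem MeasureTheory.Integrable.rpow_norm_of_le [IsFiniteMeasure μ] {f : Ω → E}
    (hf : AEStronglyMeasurable f μ) (hfa : Integrable (fun ω => ‖f ω‖ ^ a) μ) (hb : 0 ≤ b)
    (hba : b ≤ a) : Integrable (fun ω => ‖f ω‖ ^ b) μ := by
  refine ((integrable_const 1).add hfa).mono'
    ((Real.continuous_rpow_const hb).comp_aestronglyMeasurable hf.norm) (ae_of_all _ fun ω => ?_)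
  rw [Pi.add_apply, Real.norm_eq_abs, abs_of_nonneg (by positivity)]
  rcases le_total ‖f ω‖ 1 with h | h
  · linarith [Real.rpow_le_one (norm_nonneg _) h hb, Real.rpow_nonneg (norm_nonneg (f ω)) a]
  · linarith [Real.rpow_le_rpow_of_exponent_le h hba]

variable [InnerProductSpace ℝ E] [CompleteSpace E] [MeasurableSpace E] [BorelSpace E]
  [SecondCountableTopology E] [IsProbabilityMeasure μ] {X Z : Ω → E}

theorem integral_rpow_norm_add_le (ha : 2 ≤ a) (hX : Measurable X) (hZ : Measurable Z)
    (hXa : Integrable (fun ω => ‖X ω‖ ^ a) μ) (hZa : Integrable (fun ω => ‖Z ω‖ ^ a) μ)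
    (hXZ : IndepFun X Z μ) (hZ0 : ∫ ω, Z ω ∂μ = 0) :
    ∫ ω, ‖X ω + Z ω‖ ^ a ∂μ ≤ ∫ ω, ‖X ω‖ ^ a ∂μ
      + momentConst a * ((∫ ω, ‖X ω‖ ^ (a - 2) * ‖Z ω‖ ^ 2 ∂μ) + ∫ ω, ‖Z ω‖ ^ a ∂μ) := by
  have hZint : Integrable Z μ := by
    rw [← integrable_norm_iff hZ.aestronglyMeasurable]
    simpa using hZa.rpow_norm_of_le hZ.aestronglyMeasurable zero_le_one (by linarith)
  have hW : Integrable (fun ω => ‖X ω‖ ^ (a - 2) • X ω) μ := by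
    refine (hXa.rpow_norm_of_le hX.aestronglyMeasurable (b := a - 1) (by linarith)
      (by linarith)).mono' (by fun_prop) (ae_of_all _ fun ω => ?_)
    rw [norm_smul, Real.norm_eq_abs, abs_of_nonneg (by positivity),
      ← Real.rpow_add_one' (norm_nonneg _) (by linarith), show a - 2 + 1 = a - 1 by ring]
  have hWZ : IndepFun (fun ω => ‖X ω‖ ^ (a - 2) • X ω) Z μ :=
    hXZ.comp (φ := fun x => ‖x‖ ^ (a - 2) • x) (by fun_prop) measurable_id
  have hcross_int : Integrable (fun ω => ‖X ω‖ ^ (a - 2) * ⟪X ω, Z ω⟫) μ := by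
    simpa [real_inner_smul_left, innerSL_apply_apply ℝ] using
      hWZ.integrable_bilin hW hZint (innerSL ℝ)
  have hcross : ∫ ω, ‖X ω‖ ^ (a - 2) * ⟪X ω, Z ω⟫ ∂μ = 0 := by
    simpa [real_inner_smul_left, innerSL_apply_apply ℝ, hZ0] using
      hWZ.integral_bilin hW hZint (innerSL ℝ)
  have hmixed_int : Integrable (fun ω => ‖X ω‖ ^ (a - 2) * ‖Z ω‖ ^ 2) μ := by
    refine (hXZ.comp (φ := fun x => ‖x‖ ^ (a - 2)) (ψ := fun z => ‖z‖ ^ 2) (by fun_prop)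
      (by fun_prop)).integrable_mul
      (hXa.rpow_norm_of_le hX.aestronglyMeasurable (by linarith) (by linarith)) ?_
    simpa [Function.comp_def] using hZa.rpow_norm_of_le hZ.aestronglyMeasurable zero_le_two ha
  have hlin : Integrable (fun ω => ‖X ω‖ ^ a + a * (‖X ω‖ ^ (a - 2) * ⟪X ω, Z ω⟫)) μ :=
    hXa.add (hcross_int.const_mul a)
  have hquad : Integrable
      (fun ω => momentConst a * (‖X ω‖ ^ (a - 2) * ‖Z ω‖ ^ 2 + ‖Z ω‖ ^ a)) μ :=
    (hmixed_int.add hZa).const_mul _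
  calc ∫ ω, ‖X ω + Z ω‖ ^ a ∂μ
      ≤ ∫ ω, ‖X ω‖ ^ a + a * (‖X ω‖ ^ (a - 2) * ⟪X ω, Z ω⟫)
          + momentConst a * (‖X ω‖ ^ (a - 2) * ‖Z ω‖ ^ 2 + ‖Z ω‖ ^ a) ∂μ :=
        integral_mono_of_nonneg (ae_of_all _ fun ω => by positivity) (hlin.add hquad)
          (ae_of_all _ fun _ => rpow_norm_add_le ha)
    _ = _ := by
        rw [integral_add hlin hquad, integral_add hXa (hcross_int.const_mul a),
          integral_const_mul, hcross, integral_const_mul, integral_add hmixed_int hZa,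
          mul_zero, add_zero]

end Integral

/-- for `a ≥ 2` there is `C_a > 0` depending only on `a` such that for any
`ℝⁿ`-valued random variables `X, Z` with finite `a`-th moments, `Z` independent of `X` and
`E[Z] = 0`, `E‖X+Z‖^a ≤ E‖X‖^a + C_a (E[‖X‖^(a-2)‖Z‖²] + E‖Z‖^a)`. -/
theorem moment_expansion_bound :
    ∀ a : ℝ, 2 ≤ a → ∃ C > (0 : ℝ),
      ∀ (n : ℕ) (Ω : Type) (_ : MeasurableSpace Ω) (P : Measure Ω),
        IsProbabilityMeasure P →
      ∀ X Z : Ω → EuclideanSpace ℝ (Fin n), Measurable X → Measurable Z →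
        Integrable (fun ω => ‖X ω‖ ^ a) P →
        Integrable (fun ω => ‖Z ω‖ ^ a) P →
        IndepFun X Z P →
        (∫ ω, Z ω ∂P = 0) →
        ∫ ω, ‖X ω + Z ω‖ ^ a ∂P
          ≤ ∫ ω, ‖X ω‖ ^ a ∂P
            + C * ((∫ ω, ‖X ω‖ ^ (a - 2) * ‖Z ω‖ ^ 2 ∂P) + ∫ ω, ‖Z ω‖ ^ a ∂P) :=
  fun a ha => ⟨momentConst a, momentConst_pos ha,
    fun _ _ _ _ _ _ _ hX hZ hXa hZa hXZ hZ0 => integral_rpow_norm_add_le ha hX hZ hXa hZa hXZ hZ0⟩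
end

section
/- Let W: ℝ^d → ℝ be convex, radially symmetric (W(x) = w(|x|)), and differentiable, and let a ≥ 2. Then for all x, y ∈ ℝ^d and t ≥ 0, the function G(t) = W(y - x + t(|y|^(a-2)y - |x|^(a-2)x)) satisfies G'(0) ≥ 0; in particular (|y|^(a-2)y - |x|^(a-2)x)·∇W(y - x) ≥ 0. -/
/-!
Write `p = y - x` and `v = ‖y‖^(a-2) y - ‖x‖^(a-2) x`. Since `t ↦ t^(a-1)` is monotone,
`x ↦ ‖x‖^(a-2) x` is a monotone operator, i.e. `⟪p, v⟫ ≥ 0`, so `‖p + t v‖ ≥ ‖p‖` for `t ≥ 0`.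
An even convex function is nondecreasing along rays, so a radial convex `W` is monotone in the
norm; hence `W` restricted to the ray `p + t v` is minimal at `t = 0`, and its one-sided
derivative there, `⟪∇W(p), v⟫`, is nonnegative.
-/

open Set
open scoped RealInnerProductSpace

theorem monotoneOn_rpow_sub_two_mul {a : ℝ} (ha : 1 ≤ a) :
    MonotoneOn (fun t : ℝ => t ^ (a - 2) * t) (Ici 0) := by
  intro s hs t _ hst
  rcases (mem_Ici.mp hs).eq_or_lt with rfl | hs_pos
  · simp only [mul_zero]
    exact mul_nonneg (Real.rpow_nonneg hst _) hst
  · have ht_pos : 0 < t := hs_pos.trans_le hst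
    simp only [← Real.rpow_add_one hs_pos.ne', ← Real.rpow_add_one ht_pos.ne']
    exact Real.rpow_le_rpow hs_pos.le hst (by linarith)

section InnerProductSpace

variable {E : Type*} [NormedAddCommGroup E] [InnerProductSpace ℝ E]

theorem inner_sub_smul_sub_smul_nonneg_of_monotoneOn {g : ℝ → ℝ} (hg : ∀ t, 0 ≤ t → 0 ≤ g t)
    (hmono : MonotoneOn (fun t => g t * t) (Ici 0)) (x y : E) :
    0 ≤ ⟪y - x, g ‖y‖ • y - g ‖x‖ • x⟫ := by
  have hgx := hg ‖x‖ (norm_nonneg x)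
  have hgy := hg ‖y‖ (norm_nonneg y)
  have hexpand : ⟪y - x, g ‖y‖ • y - g ‖x‖ • x⟫
      = g ‖y‖ * ‖y‖ ^ 2 + g ‖x‖ * ‖x‖ ^ 2 - (g ‖y‖ + g ‖x‖) * ⟪x, y⟫ := by
    simp only [inner_sub_left, inner_sub_right, real_inner_smul_right,
      real_inner_self_eq_norm_sq, real_inner_comm x y]
    ring
  have hcs : (g ‖y‖ + g ‖x‖) * ⟪x, y⟫ ≤ (g ‖y‖ + g ‖x‖) * (‖x‖ * ‖y‖) :=
    mul_le_mul_of_nonneg_left (real_inner_le_norm x y) (add_nonneg hgy hgx)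
  have hmono_prod : 0 ≤ (‖y‖ - ‖x‖) * (g ‖y‖ * ‖y‖ - g ‖x‖ * ‖x‖) := by
    rcases le_total ‖x‖ ‖y‖ with h | h
    · exact mul_nonneg (sub_nonneg.mpr h)
        (sub_nonneg.mpr (hmono (norm_nonneg x) (norm_nonneg y) h))
    · exact mul_nonneg_of_nonpos_of_nonpos (sub_nonpos.mpr h)
        (sub_nonpos.mpr (hmono (norm_nonneg y) (norm_nonneg x) h))
  rw [hexpand]
  linarith

theorem norm_le_norm_add_smul_of_inner_nonneg {p v : E} (h : 0 ≤ ⟪p, v⟫) {t : ℝ} (ht : 0 ≤ t) :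
    ‖p‖ ≤ ‖p + t • v‖ := by
  have hsq : ‖p‖ ^ 2 ≤ ‖p + t • v‖ ^ 2 := by
    rw [norm_add_sq_real, real_inner_smul_right]
    nlinarith [mul_nonneg ht h, sq_nonneg ‖t • v‖]
  exact (pow_le_pow_iff_left₀ (norm_nonneg _) (norm_nonneg _) two_ne_zero).mp hsq

theorem HasGradientAt.inner_nonneg_of_le_on_segment [CompleteSpace E] {f : E → ℝ} {f' p v : E}
    (hf : HasGradientAt f f' p) (hmin : ∀ t ∈ Icc (0 : ℝ) 1, f p ≤ f (p + t • v)) :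
    0 ≤ ⟪f', v⟫ := by
  have hmin_on : IsMinOn f (segment ℝ p (p + v)) p := by
    intro z hz
    rw [segment_eq_image', add_sub_cancel_left] at hz
    obtain ⟨t, ht, rfl⟩ := hz
    exact hmin t ht
  have hcone : v ∈ posTangentConeAt (segment ℝ p (p + v)) p :=
    mem_posTangentConeAt_of_segment_subset subset_rfl
  simpa using hmin_on.localize.hasFDerivWithinAt_nonneg
    hf.hasFDerivAt.hasFDerivWithinAt hcone

end InnerProductSpace

section NormedSpace

variable {E : Type*} [NormedAddCommGroup E] [NormedSpace ℝ E] {W : E → ℝ}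

theorem ConvexOn.apply_smul_le_of_abs_le (hconv : ConvexOn ℝ univ W) (heven : ∀ z, W (-z) = W z)
    {c : ℝ} (hc : |c| ≤ 1) (z : E) : W (c • z) ≤ W z := by
  obtain ⟨hc₁, hc₂⟩ := abs_le.mp hc
  have hseg : c • z ∈ segment ℝ (-z) z :=
    ⟨(1 - c) / 2, (1 + c) / 2, by linarith, by linarith, by ring, by module⟩
  simpa [heven] using hconv.le_on_segment (mem_univ _) (mem_univ _) hseg

theorem ConvexOn.le_of_norm_le_of_radial {w : ℝ → ℝ} (hconv : ConvexOn ℝ univ W)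
    (hrad : ∀ x, W x = w ‖x‖) {u z : E} (h : ‖u‖ ≤ ‖z‖) : W u ≤ W z := by
  rcases eq_or_ne z 0 with rfl | hz
  · rw [norm_eq_zero.mp (le_antisymm (by simpa using h) (norm_nonneg u))]
  have hz_pos : 0 < ‖z‖ := norm_pos_iff.mpr hz
  have hc : |‖u‖ / ‖z‖| ≤ 1 := by
    rw [abs_of_nonneg (by positivity)]
    exact div_le_one_of_le₀ h hz_pos.le
  have hnorm : ‖(‖u‖ / ‖z‖) • z‖ = ‖u‖ := by
    rw [norm_smul, Real.norm_of_nonneg (by positivity), div_mul_cancel₀ _ hz_pos.ne']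
  calc W u = W ((‖u‖ / ‖z‖) • z) := by rw [hrad, hrad, hnorm]
    _ ≤ W z := hconv.apply_smul_le_of_abs_le (fun z => by rw [hrad, hrad, norm_neg]) hc z

end NormedSpace

/-- for a convex, radially symmetric, differentiable `W` and `a ≥ 2`, the
function `G(t) = W(y - x + t(‖y‖^(a-2) y - ‖x‖^(a-2) x))` satisfies `G'(0) ≥ 0`;
in particular `(‖y‖^(a-2) y - ‖x‖^(a-2) x) ⬝ ∇W(y - x) ≥ 0`. -/
theorem radial_convex_directional_derivative_nonneg
    (d : ℕ) (a : ℝ) (ha : 2 ≤ a)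
    (W : EuclideanSpace ℝ (Fin d) → ℝ)
    (W' : EuclideanSpace ℝ (Fin d) → EuclideanSpace ℝ (Fin d))
    (w : ℝ → ℝ) (hrad : ∀ x, W x = w ‖x‖)
    (hconv : ConvexOn ℝ Set.univ W)
    (hdiff : ∀ x, HasGradientAt W (W' x) x)
    (x y : EuclideanSpace ℝ (Fin d)) :
    0 ≤ deriv (fun t : ℝ =>
        W (y - x + t • (‖y‖ ^ (a - 2) • y - ‖x‖ ^ (a - 2) • x))) 0
    ∧ 0 ≤ (inner ℝ (‖y‖ ^ (a - 2) • y - ‖x‖ ^ (a - 2) • x) (W' (y - x)) : ℝ) := by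
  set p := y - x
  set v := ‖y‖ ^ (a - 2) • y - ‖x‖ ^ (a - 2) • x
  have hinner : 0 ≤ ⟪p, v⟫ :=
    inner_sub_smul_sub_smul_nonneg_of_monotoneOn (fun t ht => Real.rpow_nonneg ht _)
      (monotoneOn_rpow_sub_two_mul (by linarith)) x y
  have hmin : ∀ t ∈ Icc (0 : ℝ) 1, W p ≤ W (p + t • v) := fun t ht =>
    hconv.le_of_norm_le_of_radial hrad (norm_le_norm_add_smul_of_inner_nonneg hinner ht.1)
  have hgrad : 0 ≤ ⟪W' p, v⟫ := (hdiff p).inner_nonneg_of_le_on_segment hmin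
  have hline : HasLineDerivAt ℝ W ⟪W' p, v⟫ p v := by
    simpa using (hdiff p).hasFDerivAt.hasLineDerivAt v
  exact ⟨HasDerivAt.deriv hline ▸ hgrad, real_inner_comm v (W' p) ▸ hgrad⟩
end
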